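/- arXiv:1912.12696 — 2 statements merged into one kernel-verified Lean document; each statement's English description precedes it below -/
import Mathlib

section
/- Let (X, μ) be a σ-finite measure space, D a dense subspace of a Hilbert space H, and ω, θ : X → (functionals on D) weakly measurable maps. Suppose ω is μ-independent (if ξ : X → ℂ is measurable and ∫_X ξ(x)⟨g, ω_x⟩ dμ = 0 for every g ∈ D, then ξ = 0 μ-a.e.) and θ is total (⟨f, θ_x⟩ = 0 μ-a.e. implies f = 0). Let m : X → ℂ be measurable with m(x) ≠ 0 μ-a.e. Then the multiplier M_{m,ω,θ}, defined weakly by ⟨M f, g⟩ = ∫_X m(x)⟨f, ω_x⟩⟨θ_x, g⟩ dμ on its natural domain, is injective. -/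
open MeasureTheory Complex

/-- If `θ` is μ-independent, `ω` is total and `m(x) ≠ 0` μ-a.e., then the
multiplier `M_{m,ω,θ}`, defined weakly by
`⟨Mf, g⟩ = ∫ m(x) ⟨f,ω_x⟩ ⟨θ_x,g⟩ dμ`, is injective (its kernel is trivial). -/
theorem distribution_multiplier_injective
    {H : Type*} [NormedAddCommGroup H] [InnerProductSpace ℂ H] [CompleteSpace H]
    {X : Type*} [MeasurableSpace X] (μ : Measure X) [SigmaFinite μ]
    (D : Submodule ℂ H) (hD : Dense (D : Set H))
    (ω θ : X → D →ₗ[ℂ] ℂ)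
    (hωmeas : ∀ f : D, AEMeasurable (fun x => ω x f) μ)
    (hθmeas : ∀ g : D, AEMeasurable (fun x => θ x g) μ)
    (m : X → ℂ) (hm : AEMeasurable m μ) (hm0 : ∀ᵐ x ∂μ, m x ≠ 0)
    -- θ is μ-independent:
    (hθind : ∀ ξ : X → ℂ, AEMeasurable ξ μ →
      (∀ g : D, Integrable (fun x => ξ x * θ x g) μ) →
      (∀ g : D, ∫ x, ξ x * θ x g ∂μ = 0) → ξ =ᵐ[μ] 0)
    -- ω is total:
    (hωtot : ∀ f : D, (∀ᵐ x ∂μ, ω x f = 0) → f = 0)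
    -- f is in the domain of the multiplier and M f = 0 weakly:
    (f : D)
    (hint : ∀ g : D, Integrable (fun x => m x * ω x f * (starRingEnd ℂ) (θ x g)) μ)
    (hMf0 : ∀ g : D, ∫ x, m x * ω x f * (starRingEnd ℂ) (θ x g) ∂μ = 0) :
    f = 0 := by
  set ξ : X → ℂ := fun x => (starRingEnd ℂ) (m x * ω x f) with hξ
  have hξmeas : AEMeasurable ξ μ := (Complex.continuous_conj.measurable.comp_aemeasurable (hm.mul (hωmeas f)))
  have key : ∀ g : D, (fun x => ξ x * θ x g) =
      fun x => (starRingEnd ℂ) (m x * ω x f * (starRingEnd ℂ) (θ x g)) := by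
    intro g
    funext x
    simp [ξ, map_mul, mul_comm]
  have hξint : ∀ g : D, Integrable (fun x => ξ x * θ x g) μ := by
    intro g
    rw [key g]
    obtain ⟨h1, h2⟩ := hint g
    refine ⟨Complex.continuous_conj.comp_aestronglyMeasurable h1, ?_⟩
    simpa [HasFiniteIntegral] using h2
  have hξ0 : ∀ g : D, ∫ x, ξ x * θ x g ∂μ = 0 := by
    intro g
    rw [key g]
    rw [integral_conj, hMf0 g, map_zero]
  have hz := hθind ξ hξmeas hξint hξ0
  have hωf : ∀ᵐ x ∂μ, ω x f = 0 := by
    filter_upwards [hz, hm0] with x hx hmx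
    have : m x * ω x f = 0 := by
      have := congrArg (starRingEnd ℂ) hx
      simpa [ξ] using this
    rcases mul_eq_zero.1 this with h | h
    · exact absurd h hmx
    · exact h
  exact hωtot f hωf
end

section
/- Let (X, μ), D, H, ω, θ, m be as in the setting of distribution multipliers, with m(x) ≠ 0 μ-a.e. If ω is μ-independent and θ is total, then the range of the multiplier M_{m,ω,θ} is dense in H. -/
open MeasureTheory Complex

/-- If `ω` is μ-independent, `θ` is total and `m(x) ≠ 0` μ-a.e., then the
multiplier `M_{m,ω,θ}` (defined on the whole of the dense subspace `D`) has dense range: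
if `g ∈ D` satisfies `⟨M f, g⟩ = ∫ m(x)⟨f,ω_x⟩⟨θ_x,g⟩ dμ = 0` for all `f ∈ D`, then `g = 0`. -/
theorem distribution_multiplier_dense_range
    {H : Type*} [NormedAddCommGroup H] [InnerProductSpace ℂ H] [CompleteSpace H]
    {X : Type*} [MeasurableSpace X] (μ : Measure X) [SigmaFinite μ]
    (D : Submodule ℂ H) (hD : Dense (D : Set H))
    (ω θ : X → D →ₗ[ℂ] ℂ)
    (hωmeas : ∀ f : D, AEMeasurable (fun x => ω x f) μ)
    (hθmeas : ∀ g : D, AEMeasurable (fun x => θ x g) μ)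
    (m : X → ℂ) (hm : AEMeasurable m μ) (hm0 : ∀ᵐ x ∂μ, m x ≠ 0)
    -- ω is μ-independent:
    (hωind : ∀ ξ : X → ℂ, AEMeasurable ξ μ →
      (∀ f : D, Integrable (fun x => ξ x * ω x f) μ) →
      (∀ f : D, ∫ x, ξ x * ω x f ∂μ = 0) → ξ =ᵐ[μ] 0)
    -- θ is total:
    (hθtot : ∀ g : D, (∀ᵐ x ∂μ, θ x g = 0) → g = 0)
    -- the multiplier is defined on all of D:
    (hint : ∀ f g : D, Integrable (fun x => m x * ω x f * (starRingEnd ℂ) (θ x g)) μ)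
    (g : D)
    (horth : ∀ f : D, ∫ x, m x * ω x f * (starRingEnd ℂ) (θ x g) ∂μ = 0) :
    g = 0 := by
  set ξ : X → ℂ := fun x => m x * (starRingEnd ℂ) (θ x g) with hξ
  have hξmeas : AEMeasurable ξ μ := by exact hm.mul (Complex.continuous_conj.measurable.comp_aemeasurable (hθmeas g))
  have hcomm : ∀ f : D, (fun x => ξ x * ω x f)
      = fun x => m x * ω x f * (starRingEnd ℂ) (θ x g) := by
    intro f; funext x; simp [hξ]; ring
  have hξ0 : ξ =ᵐ[μ] 0 := by
    apply hωind ξ hξmeas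
    · intro f; rw [hcomm f]; exact hint f g
    · intro f; rw [hcomm f]; exact horth f
  apply hθtot g
  filter_upwards [hξ0, hm0] with x h1 h2
  have : (starRingEnd ℂ) (θ x g) = 0 := by
    rcases mul_eq_zero.mp h1 with h | h
    · exact absurd h h2
    · exact h
  simpa using congrArg (starRingEnd ℂ) this
end
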